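/- In the N=2 Verma module M_{NS²_+}(Δ,Λ) with 2Δ+Λ=0 and 2Δ−Λ≠0, one has G^−_{1/2} G^+_{−1/2} v = (2Δ−Λ) v ≠ 0, where v is the highest weight vector; consequently the quotient of M_{NS²_+}(Δ,Λ) by the submodule N = C[∂]G^−_{−1/2}v + C[∂]G^+_{−1/2}G^−_{−1/2}v is not the direct sum of two proper submodules as a K(1,2)_+-module (the odd generator G^−_{1/2} connects the two Virasoro-current components). -/
import Mathlib


/-- In the `N = 2` Verma module `M_{NS²₊}(Δ,Λ)` with `2Δ + Λ = 0` and `2Δ - Λ ≠ 0`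
(presented by operators satisfying the `K(1,2)₊` relations, with nonzero highest weight
vector `v` and the standard `ℂ[∂]`-basis linearly independent; half-integer indices
encoded by `a : ℤ` standing for `r = a - 1/2`, `∂ = L (-1)`), one has
`G⁻_{1/2} G⁺_{-1/2} v = (2Δ - Λ) v ≠ 0`; consequently `G⁻_{1/2} G⁺_{-1/2} v` does not
lie in the submodule `N = ℂ[∂] G⁻_{-1/2} v + ℂ[∂] G⁺_{-1/2} G⁻_{-1/2} v`, i.e. the odd
generator `G⁻_{1/2}` connects the two Virasoro-current components of the quotient, so the
quotient is not a direct sum of two proper submodules. -/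
theorem stmt_18 (V : Type*) [AddCommGroup V] [Module ℂ V]
    (L J Gp Gm : ℤ → Module.End ℂ V) (Δ Λ : ℂ) (v : V) (hv : v ≠ 0)
    (hcond1 : 2 * Δ + Λ = 0) (hcond2 : 2 * Δ - Λ ≠ 0)
    (hLL : ∀ m n : ℤ, L m * L n - L n * L m = ((m : ℂ) - n) • L (m + n))
    (hLJ : ∀ m n : ℤ, L m * J n - J n * L m = (-(n : ℂ)) • J (m + n))
    (hJJ : ∀ m n : ℤ, J m * J n - J n * J m = 0)
    (hLGp : ∀ m a : ℤ, L m * Gp a - Gp a * L m = ((m : ℂ)/2 - ((a : ℂ) - 1/2)) • Gp (m + a))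
    (hLGm : ∀ m a : ℤ, L m * Gm a - Gm a * L m = ((m : ℂ)/2 - ((a : ℂ) - 1/2)) • Gm (m + a))
    (hJGp : ∀ m a : ℤ, J m * Gp a - Gp a * J m = Gp (m + a))
    (hJGm : ∀ m a : ℤ, J m * Gm a - Gm a * J m = (-1 : ℂ) • Gm (m + a))
    (hGpGm : ∀ a b : ℤ, Gp a * Gm b + Gm b * Gp a
      = (2 : ℂ) • L (a + b - 1) + ((a : ℂ) - (b : ℂ)) • J (a + b - 1))
    (hGpGp : ∀ a b : ℤ, Gp a * Gp b + Gp b * Gp a = 0)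
    (hGmGm : ∀ a b : ℤ, Gm a * Gm b + Gm b * Gm a = 0)
    (hL0 : L 0 v = Δ • v) (hJ0 : J 0 v = Λ • v)
    (hLpos : ∀ n : ℤ, 1 ≤ n → L n v = 0)
    (hJpos : ∀ n : ℤ, 1 ≤ n → J n v = 0)
    (hGppos : ∀ a : ℤ, 1 ≤ a → Gp a v = 0)
    (hGmpos : ∀ a : ℤ, 1 ≤ a → Gm a v = 0)
    (hbasis : LinearIndependent ℂ
      (fun p : ℕ × Fin 4 => ((L (-1)) ^ p.1) (![v, Gp 0 v, Gm 0 v, Gp 0 (Gm 0 v)] p.2))) :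
    Gm 1 (Gp 0 v) = (2 * Δ - Λ) • v ∧
    Gm 1 (Gp 0 v) ≠ 0 ∧
    Gm 1 (Gp 0 v) ∉ Submodule.span ℂ
      {x : V | ∃ k : ℕ, x = ((L (-1)) ^ k) (Gm 0 v) ∨ x = ((L (-1)) ^ k) (Gp 0 (Gm 0 v))} := by
  have key : Gm 1 (Gp 0 v) = (2 * Δ - Λ) • v := by
    have h := DFunLike.congr_fun (hGpGm 0 1) v
    simp only [Module.End.mul_apply, LinearMap.add_apply, LinearMap.smul_apply,
      hGmpos 1 le_rfl, map_zero, zero_add] at h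
    norm_num at h
    rw [h, hL0, hJ0]
    module
  refine ⟨key, ?_, ?_⟩
  · rw [key]
    exact smul_ne_zero hcond2 hv
  · intro hmem
    rw [key] at hmem
    have hvmem : v ∈ Submodule.span ℂ
        {x : V | ∃ k : ℕ, x = ((L (-1)) ^ k) (Gm 0 v) ∨ x = ((L (-1)) ^ k) (Gp 0 (Gm 0 v))} := by
      have := Submodule.smul_mem _ (2 * Δ - Λ)⁻¹ hmem
      rwa [smul_smul, inv_mul_cancel₀ hcond2, one_smul] at this
    set f : ℕ × Fin 4 → V := fun p => ((L (-1)) ^ p.1) (![v, Gp 0 v, Gm 0 v, Gp 0 (Gm 0 v)] p.2)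
    have hnot : f (0, 0) ∉ Submodule.span ℂ
        (f '' {p : ℕ × Fin 4 | p.2 = 2 ∨ p.2 = 3}) := by
      refine hbasis.notMem_span_image ?_
      simp
    apply hnot
    have hle : Submodule.span ℂ
        {x : V | ∃ k : ℕ, x = ((L (-1)) ^ k) (Gm 0 v) ∨ x = ((L (-1)) ^ k) (Gp 0 (Gm 0 v))}
        ≤ Submodule.span ℂ (f '' {p : ℕ × Fin 4 | p.2 = 2 ∨ p.2 = 3}) := by
      apply Submodule.span_mono
      rintro x ⟨k, hk | hk⟩
      · exact ⟨(k, 2), Or.inl rfl, hk.symm⟩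
      · exact ⟨(k, 3), Or.inr rfl, hk.symm⟩
    have : f (0, 0) = v := by simp [f]
    rw [this]
    exact hle hvmem
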